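/- arXiv:1608.04891 — 5 statements merged into one kernel-verified Lean document; each statement's English description precedes it below -/
import Mathlib

section
/- Let p be a prime and i > 0 an integer. For points a, a' ∈ P¹(Q_p) with unimodular coordinates (i.e., coordinates in Z_p² with at least one coordinate a unit), the closed balls B⁺(a, |p|^i) and B⁺(a', |p|^i) in P¹(C_p) intersect if and only if a ≡ a' (mod p^i), i.e., the reductions of the unimodular coordinates of a and a' modulo p^i define the same point of P¹(Z/p^i Z). -/
lemma padic_dvd_iff_norm_le {p : ℕ} [Fact p.Prime] (x : ℤ_[p]) (i : ℕ) :
    (p : ℤ_[p]) ^ i ∣ x ↔ ‖x‖ ≤ (p : ℝ) ^ (-(i : ℤ)) := by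
  rw [PadicInt.norm_le_pow_iff_mem_span_pow, Ideal.mem_span_singleton]

lemma p_not_unit {p : ℕ} [Fact p.Prime] : ¬ IsUnit (p : ℤ_[p]) := by
  rw [PadicInt.isUnit_iff, PadicInt.norm_p]
  have hp : (1 : ℝ) < p := by exact_mod_cast (Fact.out : p.Prime).one_lt
  intro h
  have : (p : ℝ) = 1 := by
    field_simp at h
    linarith [h]
  linarith

/-- Helper: from divisibility of the determinant, produce the unit, assuming `a0` is a unit. -/
lemma det_helper {p : ℕ} [Fact p.Prime] {i : ℕ} (hi : 0 < i)
    (a0 a1 a0' a1' : ℤ_[p]) (h0 : IsUnit a0) (h' : IsUnit a0' ∨ IsUnit a1')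
    (hd : (p : ℤ_[p]) ^ i ∣ a0 * a1' - a1 * a0') :
    ∃ u : ℤ_[p]ˣ, (p : ℤ_[p]) ^ i ∣ a0 - (u : ℤ_[p]) * a0' ∧
      (p : ℤ_[p]) ^ i ∣ a1 - (u : ℤ_[p]) * a1' := by
  have h0' : IsUnit a0' := by
    by_contra hn
    have h1' : IsUnit a1' := h'.resolve_left hn
    have hpdvd : (p : ℤ_[p]) ∣ a0' := (PadicInt.norm_lt_one_iff_dvd _).mp
      (lt_of_le_of_ne (PadicInt.norm_le_one _) (fun h => hn (PadicInt.isUnit_iff.mpr h)))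
    have hpdvdD : (p : ℤ_[p]) ∣ a0 * a1' - a1 * a0' :=
      dvd_trans (dvd_pow_self _ hi.ne') hd
    have : (p : ℤ_[p]) ∣ a0 * a1' := by
      have := dvd_add hpdvdD (hpdvd.mul_left a1)
      simpa using this
    exact p_not_unit (isUnit_of_dvd_unit this (h0.mul h1'))
  have h2 : a0' * (↑h0'.unit⁻¹ : ℤ_[p]) = 1 := h0'.mul_val_inv
  refine ⟨h0.unit * h0'.unit⁻¹, ?_, ?_⟩
  · have : a0 - (↑(h0.unit * h0'.unit⁻¹) : ℤ_[p]) * a0' = 0 := by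
      push_cast
      rw [h0.unit_spec]
      linear_combination (-a0) * h2
    rw [this]; exact dvd_zero _
  · have key : a0' * (a1 - (↑(h0.unit * h0'.unit⁻¹) : ℤ_[p]) * a1') =
        -(a0 * a1' - a1 * a0') := by
      push_cast
      rw [h0.unit_spec]
      linear_combination (-(a0 * a1')) * h2
    have hd2 : (p : ℤ_[p]) ^ i ∣ a0' * (a1 - (↑(h0.unit * h0'.unit⁻¹) : ℤ_[p]) * a1') := by
      rw [key]; exact hd.neg_right
    have := hd2.mul_left (↑h0'.unit⁻¹ : ℤ_[p])
    have heq : (↑h0'.unit⁻¹ : ℤ_[p]) * (a0' * (a1 - (↑(h0.unit * h0'.unit⁻¹) : ℤ_[p]) * a1')) =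
        a1 - (↑(h0.unit * h0'.unit⁻¹) : ℤ_[p]) * a1' := by
      rw [← mul_assoc, h0'.val_inv_mul, one_mul]
    rwa [heq] at this

/-- For a prime `p`, an integer `i > 0`, and points `a, a'` of `ℙ¹(ℚ_p)` given by
unimodular coordinates in `ℤ_p`, the closed balls `B⁺(a, |p|^i)` and `B⁺(a', |p|^i)` in
`ℙ¹(ℂ_p)` (here `ℂ_p` is modelled by any nonarchimedean normed field `K` whose norm extends
the `p`-adic one) intersect if and only if `a ≡ a' (mod p^i)`, i.e. the unimodular coordinates
define the same point of `ℙ¹(ℤ/p^iℤ)`. -/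
theorem stmt_0 (p : ℕ) [Fact p.Prime] (i : ℕ) (hi : 0 < i)
    (K : Type*) [NormedField K] [Algebra ℚ_[p] K]
    (hK : ∀ x : ℚ_[p], ‖algebraMap ℚ_[p] K x‖ = ‖x‖)
    (hna : IsNonarchimedean (fun x : K => ‖x‖))
    (a a' : Fin 2 → ℤ_[p])
    (ha : IsUnit (a 0) ∨ IsUnit (a 1))
    (ha' : IsUnit (a' 0) ∨ IsUnit (a' 1)) :
    (∃ z : Fin 2 → K, max ‖z 0‖ ‖z 1‖ = 1 ∧
        ‖z 0 * algebraMap ℚ_[p] K (a 1 : ℚ_[p]) -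
            z 1 * algebraMap ℚ_[p] K (a 0 : ℚ_[p])‖ ≤ (p : ℝ) ^ (-(i : ℤ)) ∧
        ‖z 0 * algebraMap ℚ_[p] K (a' 1 : ℚ_[p]) -
            z 1 * algebraMap ℚ_[p] K (a' 0 : ℚ_[p])‖ ≤ (p : ℝ) ^ (-(i : ℤ))) ↔
      ∃ u : ℤ_[p]ˣ, (p : ℤ_[p]) ^ i ∣ a 0 - (u : ℤ_[p]) * a' 0 ∧
        (p : ℤ_[p]) ^ i ∣ a 1 - (u : ℤ_[p]) * a' 1 := by
  set f := algebraMap ℚ_[p] K with hf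
  have hnormZ : ∀ x : ℤ_[p], ‖f (x : ℚ_[p])‖ = ‖x‖ := fun x => by
    rw [hK]; rfl
  have hnormZle : ∀ x : ℤ_[p], ‖f (x : ℚ_[p])‖ ≤ 1 := fun x => by
    rw [hnormZ]; exact PadicInt.norm_le_one x
  set ε : ℝ := (p : ℝ) ^ (-(i : ℤ)) with hε
  constructor
  · rintro ⟨z, hz, h1, h2⟩
    set D : ℤ_[p] := a 0 * a' 1 - a 1 * a' 0 with hD
    -- get determinant divisibility
    have hDdvd : (p : ℤ_[p]) ^ i ∣ D := by
      have hsub : ∀ x y : K, ‖x - y‖ ≤ max ‖x‖ ‖y‖ := fun x y => by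
        have := hna x (-y); simpa [sub_eq_add_neg] using this
      have key : ∀ j : Fin 2, ‖z j * f (D : ℚ_[p])‖ ≤ ε := by
        intro j
        have hid : z j * f (D : ℚ_[p]) =
            f (a j : ℚ_[p]) * (z 0 * f (a' 1 : ℚ_[p]) - z 1 * f (a' 0 : ℚ_[p])) -
            f (a' j : ℚ_[p]) * (z 0 * f (a 1 : ℚ_[p]) - z 1 * f (a 0 : ℚ_[p])) := by
          have : f (D : ℚ_[p]) = f (a 0 : ℚ_[p]) * f (a' 1 : ℚ_[p]) -
              f (a 1 : ℚ_[p]) * f (a' 0 : ℚ_[p]) := by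
            rw [hD]; push_cast; rw [map_sub, map_mul, map_mul]
          rw [this]
          fin_cases j <;> simp <;> ring
        rw [hid]
        refine le_trans (hsub _ _) (max_le ?_ ?_)
        · rw [norm_mul]
          calc ‖f (a j : ℚ_[p])‖ * ‖z 0 * f (a' 1 : ℚ_[p]) - z 1 * f (a' 0 : ℚ_[p])‖
              ≤ 1 * ε := mul_le_mul (hnormZle _) h2 (norm_nonneg _) zero_le_one
            _ = ε := one_mul ε
        · rw [norm_mul]
          calc ‖f (a' j : ℚ_[p])‖ * ‖z 0 * f (a 1 : ℚ_[p]) - z 1 * f (a 0 : ℚ_[p])‖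
              ≤ 1 * ε := mul_le_mul (hnormZle _) h1 (norm_nonneg _) zero_le_one
            _ = ε := one_mul ε
      have : ‖f (D : ℚ_[p])‖ ≤ ε := by
        have h0 := key 0
        have h1' := key 1
        rw [norm_mul] at h0 h1'
        rcases max_cases ‖z 0‖ ‖z 1‖ with ⟨hm, _⟩ | ⟨hm, _⟩
        · rw [hm] at hz; rw [hz, one_mul] at h0; exact h0
        · rw [hm] at hz; rw [hz, one_mul] at h1'; exact h1'
      rw [hnormZ] at this
      exact (padic_dvd_iff_norm_le D i).mpr this
    rcases ha with h0 | h1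
    · exact det_helper hi _ _ _ _ h0 ha' hDdvd
    · have hd' : (p : ℤ_[p]) ^ i ∣ a 1 * a' 0 - a 0 * a' 1 := by
        have := hDdvd.neg_right; rw [hD] at this
        simpa [neg_sub] using this
      obtain ⟨u, hu1, hu0⟩ := det_helper hi (a 1) (a 0) (a' 1) (a' 0) h1 ha'.symm hd'
      exact ⟨u, hu0, hu1⟩
  · rintro ⟨u, hu0, hu1⟩
    refine ⟨fun j => f ((a j : ℚ_[p])), ?_, ?_, ?_⟩
    · have h0 : ‖f ((a 0 : ℚ_[p]))‖ = ‖a 0‖ := hnormZ _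
      have h1 : ‖f ((a 1 : ℚ_[p]))‖ = ‖a 1‖ := hnormZ _
      rw [h0, h1]
      rcases ha with h | h
      · rw [max_eq_left]
        · exact PadicInt.isUnit_iff.mp h
        · rw [PadicInt.isUnit_iff.mp h]; exact PadicInt.norm_le_one _
      · rw [max_eq_right]
        · exact PadicInt.isUnit_iff.mp h
        · rw [PadicInt.isUnit_iff.mp h]; exact PadicInt.norm_le_one _
    · have : f ((a 0 : ℚ_[p])) * f ((a 1 : ℚ_[p])) - f ((a 1 : ℚ_[p])) * f ((a 0 : ℚ_[p])) = 0 := by ring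
      rw [this, norm_zero]
      positivity
    · have hid : f ((a 0 : ℚ_[p])) * f ((a' 1 : ℚ_[p])) - f ((a 1 : ℚ_[p])) * f ((a' 0 : ℚ_[p])) =
          f (((a 0 * a' 1 - a 1 * a' 0 : ℤ_[p]) : ℚ_[p])) := by
        push_cast
        rw [map_sub, map_mul, map_mul]
      rw [hid, hnormZ]
      rw [← padic_dvd_iff_norm_le]
      have : a 0 * a' 1 - a 1 * a' 0 =
          (a 0 - (u : ℤ_[p]) * a' 0) * a' 1 - (a 1 - (u : ℤ_[p]) * a' 1) * a' 0 := by ring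
      rw [this]
      exact dvd_sub (hu0.mul_right _) (hu1.mul_right _)
end

section
/- Let O be the Hurwitz order in (−1,−1/Q). Let α, β, γ ∈ O with Nm(β) = p a prime. If p divides αβγ in O (i.e., αβγ ∈ pO) and p does not divide αβ, then p divides βγ. -/
open scoped Quaternion

/-- The element `a·1 + b·i + c·j + d·ω` of the rational quaternions, where
`ω = (1+i+j+k)/2` is the Hurwitz unit. -/
noncomputable def hurElt (a b c d : ℤ) : ℍ[ℚ] :=
  ⟨(a : ℚ) + (d : ℚ)/2, (b : ℚ) + (d : ℚ)/2, (c : ℚ) + (d : ℚ)/2, (d : ℚ)/2⟩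

/-- The Hurwitz order: the `ℤ`-span of `1, i, j, (1+i+j+k)/2` in `(−1,−1/ℚ)`. -/
def Hur : Set ℍ[ℚ] := {x | ∃ a b c d : ℤ, x = hurElt a b c d}

open Quaternion

@[simp] lemma hurElt_re (a b c d : ℤ) : (hurElt a b c d).re = (a : ℚ) + (d : ℚ)/2 := rfl
@[simp] lemma hurElt_imI (a b c d : ℤ) : (hurElt a b c d).imI = (b : ℚ) + (d : ℚ)/2 := rfl
@[simp] lemma hurElt_imJ (a b c d : ℤ) : (hurElt a b c d).imJ = (c : ℚ) + (d : ℚ)/2 := rfl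
@[simp] lemma hurElt_imK (a b c d : ℤ) : (hurElt a b c d).imK = (d : ℚ)/2 := rfl

lemma hurElt_add (a b c d a' b' c' d' : ℤ) :
    hurElt a b c d + hurElt a' b' c' d' = hurElt (a+a') (b+b') (c+c') (d+d') := by
  apply Quaternion.ext <;> simp <;> push_cast <;> ring

lemma hurElt_sub (a b c d a' b' c' d' : ℤ) :
    hurElt a b c d - hurElt a' b' c' d' = hurElt (a-a') (b-b') (c-c') (d-d') := by
  apply Quaternion.ext <;> simp <;> push_cast <;> ring

lemma hurElt_mul (a b c d A B C D : ℤ) :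
    hurElt a b c d * hurElt A B C D =
      hurElt (a*A - b*D - b*C - b*B + c*B - c*C - d*D - d*C)
             (a*B + b*A - b*C + c*D + c*B + d*B - d*C)
             (a*C - b*D - b*C + c*D + c*B + c*A + d*B)
             (a*D + d*A - d*B + d*C + d*D + 2*b*C + b*D - 2*c*B - c*D) := by
  apply Quaternion.ext <;>
    simp only [Quaternion.re_mul, Quaternion.imI_mul, Quaternion.imJ_mul, Quaternion.imK_mul,
      hurElt_re, hurElt_imI, hurElt_imJ, hurElt_imK] <;>
    push_cast <;> ring

lemma hurElt_star (a b c d : ℤ) :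
    star (hurElt a b c d) = hurElt (a+d) (-b) (-c) (-d) := by
  apply Quaternion.ext <;>
    simp [Quaternion.re_star, Quaternion.imI_star, Quaternion.imJ_star, Quaternion.imK_star] <;>
    push_cast <;> ring

lemma normSq_hurElt (a b c d : ℤ) :
    normSq (hurElt a b c d) = ((a^2+b^2+c^2+d^2+a*d+b*d+c*d : ℤ) : ℚ) := by
  rw [Quaternion.normSq_def']
  simp only [hurElt_re, hurElt_imI, hurElt_imJ, hurElt_imK]
  push_cast; ring

lemma Hur_add {x y : ℍ[ℚ]} (hx : x ∈ Hur) (hy : y ∈ Hur) : x + y ∈ Hur := by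
  obtain ⟨a,b,c,d,rfl⟩ := hx; obtain ⟨a',b',c',d',rfl⟩ := hy
  exact ⟨_,_,_,_, hurElt_add ..⟩

lemma Hur_sub {x y : ℍ[ℚ]} (hx : x ∈ Hur) (hy : y ∈ Hur) : x - y ∈ Hur := by
  obtain ⟨a,b,c,d,rfl⟩ := hx; obtain ⟨a',b',c',d',rfl⟩ := hy
  exact ⟨_,_,_,_, hurElt_sub ..⟩

lemma Hur_mul {x y : ℍ[ℚ]} (hx : x ∈ Hur) (hy : y ∈ Hur) : x * y ∈ Hur := by
  obtain ⟨a,b,c,d,rfl⟩ := hx; obtain ⟨a',b',c',d',rfl⟩ := hy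
  exact ⟨_,_,_,_, hurElt_mul ..⟩

lemma Hur_star {x : ℍ[ℚ]} (hx : x ∈ Hur) : star x ∈ Hur := by
  obtain ⟨a,b,c,d,rfl⟩ := hx
  exact ⟨_,_,_,_, hurElt_star ..⟩

lemma Hur_intCast (n : ℤ) : ((n : ℚ) : ℍ[ℚ]) ∈ Hur := by
  refine ⟨n, 0, 0, 0, ?_⟩
  apply Quaternion.ext <;> simp

lemma Hur_natCast (n : ℕ) : ((n : ℕ) : ℍ[ℚ]) ∈ Hur := by
  have := Hur_intCast (n : ℤ)
  rw [show (((n:ℤ) : ℚ) : ℍ[ℚ]) = ((n : ℕ) : ℍ[ℚ]) by push_cast; rfl] at this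
  exact this

lemma Hur_normSq_nat {x : ℍ[ℚ]} (hx : x ∈ Hur) : ∃ n : ℕ, normSq x = (n : ℚ) := by
  obtain ⟨a,b,c,d,rfl⟩ := hx
  have h := normSq_hurElt a b c d
  have hnn : (0:ℚ) ≤ normSq (hurElt a b c d) := normSq_nonneg
  refine ⟨(a^2+b^2+c^2+d^2+a*d+b*d+c*d).toNat, ?_⟩
  rw [h] at hnn ⊢
  have : (0:ℤ) ≤ a^2+b^2+c^2+d^2+a*d+b*d+c*d := by exact_mod_cast hnn
  exact_mod_cast congrArg (fun z : ℤ => (z : ℚ)) (Int.toNat_of_nonneg this).symm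

lemma halves_mem (e1 e2 e3 e4 : ℤ) (h1 : Odd e1) (h2 : Odd e2) (h3 : Odd e3) (h4 : Odd e4) :
    (⟨(e1:ℚ)/2, (e2:ℚ)/2, (e3:ℚ)/2, (e4:ℚ)/2⟩ : ℍ[ℚ]) ∈ Hur := by
  obtain ⟨k1, rfl⟩ := h1; obtain ⟨k2, rfl⟩ := h2
  obtain ⟨k3, rfl⟩ := h3; obtain ⟨k4, rfl⟩ := h4
  refine ⟨k1 - k4, k2 - k4, k3 - k4, 2*k4+1, ?_⟩
  apply Quaternion.ext <;> simp [hurElt] <;> push_cast <;> ring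

lemma half_odd {x : ℚ} (m : ℤ) (h : (x - m)^2 = 1/4) : ∃ e : ℤ, Odd e ∧ x = (e:ℚ)/2 := by
  have : (x - m - 1/2) * (x - m + 1/2) = 0 := by nlinarith
  rcases mul_eq_zero.mp this with h' | h'
  · exact ⟨2*m+1, ⟨m, by ring⟩, by push_cast; linarith⟩
  · exact ⟨2*m-1, ⟨m-1, by ring⟩, by push_cast; linarith⟩

lemma euclid (z : ℍ[ℚ]) : ∃ q ∈ Hur, normSq (z - q) < 1 := by
  set m1 := round z.re with hm1
  set m2 := round z.imI with hm2
  set m3 := round z.imJ with hm3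
  set m4 := round z.imK with hm4
  set q0 : ℍ[ℚ] := hurElt (m1 - m4) (m2 - m4) (m3 - m4) (2*m4) with hq0
  have hc1 : (z - q0).re = z.re - m1 := by
    simp [hq0]
  have hc2 : (z - q0).imI = z.imI - m2 := by
    simp [hq0]
  have hc3 : (z - q0).imJ = z.imJ - m3 := by
    simp [hq0]
  have hc4 : (z - q0).imK = z.imK - m4 := by
    simp [hq0]
  have hb1 : |z.re - (m1:ℚ)| ≤ 1/2 := abs_sub_round _
  have hb2 : |z.imI - (m2:ℚ)| ≤ 1/2 := abs_sub_round _
  have hb3 : |z.imJ - (m3:ℚ)| ≤ 1/2 := abs_sub_round _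
  have hb4 : |z.imK - (m4:ℚ)| ≤ 1/2 := abs_sub_round _
  rw [abs_le] at hb1 hb2 hb3 hb4
  have s1 : (z.re - (m1:ℚ))^2 ≤ 1/4 := by nlinarith [hb1.1, hb1.2]
  have s2 : (z.imI - (m2:ℚ))^2 ≤ 1/4 := by nlinarith [hb2.1, hb2.2]
  have s3 : (z.imJ - (m3:ℚ))^2 ≤ 1/4 := by nlinarith [hb3.1, hb3.2]
  have s4 : (z.imK - (m4:ℚ))^2 ≤ 1/4 := by nlinarith [hb4.1, hb4.2]
  by_cases H : (z.re - (m1:ℚ))^2 = 1/4 ∧ (z.imI - (m2:ℚ))^2 = 1/4 ∧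
      (z.imJ - (m3:ℚ))^2 = 1/4 ∧ (z.imK - (m4:ℚ))^2 = 1/4
  · obtain ⟨e1, ho1, he1⟩ := half_odd m1 H.1
    obtain ⟨e2, ho2, he2⟩ := half_odd m2 H.2.1
    obtain ⟨e3, ho3, he3⟩ := half_odd m3 H.2.2.1
    obtain ⟨e4, ho4, he4⟩ := half_odd m4 H.2.2.2
    refine ⟨z, ?_, by simp⟩
    have : z = (⟨(e1:ℚ)/2, (e2:ℚ)/2, (e3:ℚ)/2, (e4:ℚ)/2⟩ : ℍ[ℚ]) := by
      apply Quaternion.ext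
      exacts [he1, he2, he3, he4]
    rw [this]
    exact halves_mem e1 e2 e3 e4 ho1 ho2 ho3 ho4
  · refine ⟨q0, ⟨_,_,_,_, rfl⟩, ?_⟩
    rw [normSq_def', hc1, hc2, hc3, hc4]
    by_contra hge
    push_neg at hge
    exact H ⟨by linarith, by linarith, by linarith, by linarith⟩

lemma Hur_zero : (0 : ℍ[ℚ]) ∈ Hur := by
  refine ⟨0,0,0,0, ?_⟩; apply Quaternion.ext <;> simp

lemma Hur_one : (1 : ℍ[ℚ]) ∈ Hur := by
  refine ⟨1,0,0,0, ?_⟩; apply Quaternion.ext <;> simp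

lemma Hur_p (p : ℕ) : ((p : ℕ) : ℍ[ℚ]) ∈ Hur := Hur_natCast p


/-- For Hurwitz quaternions `α, β, γ` with `Nm(β) = p` prime, if `p ∣ αβγ`
(in the Hurwitz order) and `p ∤ αβ`, then `p ∣ βγ`. -/
theorem stmt_4 (p : ℕ) (hp : p.Prime) (α β γ : ℍ[ℚ])
    (hα : α ∈ Hur) (hβ : β ∈ Hur) (hγ : γ ∈ Hur)
    (hnβ : Quaternion.normSq β = (p : ℚ))
    (h1 : ∃ δ ∈ Hur, α * β * γ = (p : ℍ[ℚ]) * δ)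
    (h2 : ¬ ∃ δ ∈ Hur, α * β = (p : ℍ[ℚ]) * δ) :
    ∃ δ ∈ Hur, β * γ = (p : ℍ[ℚ]) * δ := by
  obtain ⟨δ, hδ, hδeq⟩ := h1
  have hp0 : (p : ℍ[ℚ]) ≠ 0 := by
    intro h
    have : normSq ((p:ℕ) : ℍ[ℚ]) = 0 := by rw [h]; simp
    rw [Quaternion.normSq_natCast] at this
    have : (p:ℚ) = 0 := by nlinarith [this]
    exact hp.ne_zero (by exact_mod_cast this)
  have hcomm : ∀ x : ℍ[ℚ], (p:ℍ[ℚ]) * x = x * (p:ℍ[ℚ]) := fun x => by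
    rw [← Quaternion.coe_natCast, Quaternion.coe_commutes]
  have hββ : β * star β = (p:ℍ[ℚ]) := by
    rw [Quaternion.self_mul_star, hnβ, Quaternion.coe_natCast]
  have hsββ : star β * β = (p:ℍ[ℚ]) := by
    rw [Quaternion.star_mul_self, hnβ, Quaternion.coe_natCast]
  -- the left ideal generated by α*β and p
  set I : ℍ[ℚ] → Prop := fun x => ∃ a ∈ Hur, ∃ b ∈ Hur, x = a * (α * β) + b * (p:ℍ[ℚ]) with hI
  have hIp : I ((p:ℕ) : ℍ[ℚ]) := ⟨0, Hur_zero, 1, Hur_one, by simp⟩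
  have hIαβ : I (α * β) := ⟨1, Hur_one, 0, Hur_zero, by simp⟩
  have hIHur : ∀ x, I x → x ∈ Hur := by
    rintro x ⟨a, ha, b, hb, rfl⟩
    exact Hur_add (Hur_mul ha (Hur_mul hα hβ)) (Hur_mul hb (Hur_p p))
  have hIsub : ∀ x y, I x → I y → I (x - y) := by
    rintro x y ⟨a, ha, b, hb, rfl⟩ ⟨a', ha', b', hb', rfl⟩
    exact ⟨a - a', Hur_sub ha ha', b - b', Hur_sub hb hb', by noncomm_ring⟩
  have hImul : ∀ q x, q ∈ Hur → I x → I (q * x) := by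
    rintro q x hq ⟨a, ha, b, hb, rfl⟩
    exact ⟨q * a, Hur_mul hq ha, q * b, Hur_mul hq hb, by noncomm_ring⟩
  set S : Set ℕ := {n | ∃ x, I x ∧ x ≠ 0 ∧ normSq x = (n:ℚ)} with hSdef
  have hSne : S.Nonempty := ⟨p^2, ((p:ℕ):ℍ[ℚ]), hIp, hp0, by
    rw [Quaternion.normSq_natCast]; push_cast; ring⟩
  obtain ⟨η, hIη, hη0, hηn⟩ := Nat.sInf_mem hSne
  set n₀ := sInf S with hn₀
  have hmin : ∀ m ∈ S, n₀ ≤ m := fun m hm => Nat.sInf_le hm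
  have hnormηpos : 0 < normSq η := lt_of_le_of_ne normSq_nonneg (Ne.symm (by
    simpa [Quaternion.normSq_eq_zero] using hη0))
  -- division with remainder: everything in I is a left multiple of η
  have hdiv : ∀ x, I x → ∃ q ∈ Hur, x = q * η := by
    intro x hx
    obtain ⟨q, hq, hlt⟩ := euclid (x * η⁻¹)
    have hηne : η ≠ 0 := hη0
    have hr : x - q * η = (x * η⁻¹ - q) * η := by
      rw [sub_mul, mul_assoc, inv_mul_cancel₀ hηne, mul_one]
    have hrI : I (x - q * η) := hIsub _ _ hx (hImul q η hq hIη)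
    by_cases h0 : x - q * η = 0
    · exact ⟨q, hq, sub_eq_zero.mp h0⟩
    · exfalso
      obtain ⟨m, hm⟩ := Hur_normSq_nat (hIHur _ hrI)
      have hmS : m ∈ S := ⟨_, hrI, h0, hm⟩
      have hle : (n₀:ℚ) ≤ m := by exact_mod_cast hmin m hmS
      have hnr : normSq (x - q * η) < normSq η := by
        rw [hr, map_mul]
        nlinarith [hnormηpos, hlt, normSq_nonneg (a := x * η⁻¹ - q)]
      rw [hm, hηn] at hnr
      linarith
  obtain ⟨σ, hσ, hσeq⟩ := hdiv _ hIαβ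
  obtain ⟨τ, hτ, hτeq⟩ := hdiv _ hIp
  obtain ⟨a, ha, b, hb, hηeq⟩ := hIη
  have hηH : η ∈ Hur := hIHur η ⟨a, ha, b, hb, hηeq⟩
  obtain ⟨n₁, hn₁⟩ := Hur_normSq_nat hτ
  have hprodQ : ((p:ℚ))^2 = (n₁ : ℚ) * (n₀ : ℚ) := by
    have := congrArg normSq hτeq
    rwa [Quaternion.normSq_natCast, map_mul, hn₁, hηn] at this
  have hprod : n₁ * n₀ = p^2 := by exact_mod_cast hprodQ.symm
  have hdvd : n₀ ∣ p ^ 2 := Dvd.intro_left n₁ hprod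
  obtain ⟨k, hk2, hn₀k⟩ := (Nat.dvd_prime_pow hp).mp hdvd
  interval_cases k
  · -- n₀ = 1 : impossible since then p | star β
    exfalso
    rw [pow_zero] at hn₀k
    have hη1 : star η * η = 1 := by
      rw [Quaternion.star_mul_self, hηn, hn₀k]; norm_num
    have hX : η * star β = (p:ℍ[ℚ]) * (a * α + b * star β) := by
      calc η * star β = a * α * (β * star β) + b * ((p:ℍ[ℚ]) * star β) := by
            rw [hηeq]; noncomm_ring
        _ = a * α * (p:ℍ[ℚ]) + b * ((p:ℍ[ℚ]) * star β) := by rw [hββ]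
        _ = (p:ℍ[ℚ]) * (a * α) + (p:ℍ[ℚ]) * (b * star β) := by
            rw [hcomm (a*α), hcomm (b * star β), hcomm (star β)]; noncomm_ring
        _ = (p:ℍ[ℚ]) * (a * α + b * star β) := by noncomm_ring
    have hkey : star β = (p:ℍ[ℚ]) * (star η * (a * α + b * star β)) := by
      calc star β = (star η * η) * star β := by rw [hη1, one_mul]
        _ = star η * (η * star β) := by rw [mul_assoc]
        _ = star η * ((p:ℍ[ℚ]) * (a * α + b * star β)) := by rw [hX]
        _ = (star η * (p:ℍ[ℚ])) * (a * α + b * star β) := by rw [mul_assoc]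
        _ = (p:ℍ[ℚ]) * (star η * (a * α + b * star β)) := by
            rw [← hcomm (star η), mul_assoc]
    set w := star η * (a * α + b * star β) with hw
    have hwH : w ∈ Hur := Hur_mul (Hur_star hηH) (Hur_add (Hur_mul ha hα) (Hur_mul hb (Hur_star hβ)))
    obtain ⟨N, hN⟩ := Hur_normSq_nat hwH
    have : (p:ℚ) = (p:ℚ)^2 * N := by
      have := congrArg normSq hkey
      rwa [Quaternion.normSq_star, hnβ, map_mul, Quaternion.normSq_natCast, hN] at this
    have hnat : p = p^2 * N := by exact_mod_cast this
    have h2p : 2 ≤ p := hp.two_le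
    rcases Nat.eq_zero_or_pos N with h | h
    · rw [h, mul_zero] at hnat; omega
    · nlinarith
  · -- n₀ = p : the main case
    rw [pow_one] at hn₀k
    have hηstar : star η * η = (p:ℍ[ℚ]) := by
      rw [Quaternion.star_mul_self, hηn, hn₀k, Quaternion.coe_natCast]
    have hηγ : η * γ = (p:ℍ[ℚ]) * (a * δ + b * γ) := by
      calc η * γ = a * (α * β * γ) + b * ((p:ℍ[ℚ]) * γ) := by rw [hηeq]; noncomm_ring
        _ = a * ((p:ℍ[ℚ]) * δ) + b * ((p:ℍ[ℚ]) * γ) := by rw [hδeq]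
        _ = (a * (p:ℍ[ℚ])) * δ + (b * (p:ℍ[ℚ])) * γ := by noncomm_ring
        _ = ((p:ℍ[ℚ]) * a) * δ + ((p:ℍ[ℚ]) * b) * γ := by rw [hcomm a, hcomm b]
        _ = (p:ℍ[ℚ]) * (a * δ + b * γ) := by noncomm_ring
    set w := a * δ + b * γ with hw
    have hwH : w ∈ Hur := Hur_add (Hur_mul ha hδ) (Hur_mul hb hγ)
    have hγeq : γ = star η * w := by
      apply mul_left_cancel₀ hp0
      calc (p:ℍ[ℚ]) * γ = (star η * η) * γ := by rw [hηstar]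
        _ = star η * (η * γ) := by rw [mul_assoc]
        _ = star η * ((p:ℍ[ℚ]) * w) := by rw [hηγ]
        _ = (star η * (p:ℍ[ℚ])) * w := by rw [mul_assoc]
        _ = (p:ℍ[ℚ]) * (star η * w) := by rw [← hcomm (star η), mul_assoc]
    set m := a * α + b * star β with hm
    have hmH : m ∈ Hur := Hur_add (Hur_mul ha hα) (Hur_mul hb (Hur_star hβ))
    have hηm : η = m * β := by
      calc η = a * (α * β) + b * (p:ℍ[ℚ]) := hηeq
        _ = a * (α * β) + b * (star β * β) := by rw [hsββ]
        _ = m * β := by rw [hm]; noncomm_ring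
    refine ⟨star m * w, Hur_mul (Hur_star hmH) hwH, ?_⟩
    calc β * γ = β * (star η * w) := by rw [hγeq]
      _ = β * ((star β * star m) * w) := by rw [hηm, star_mul]
      _ = (β * star β) * (star m * w) := by noncomm_ring
      _ = (p:ℍ[ℚ]) * (star m * w) := by rw [hββ]
  · -- n₀ = p² : impossible since then p | α*β
    exfalso
    have hppos : 0 < p := hp.pos
    have hp2 : 0 < p^2 := by positivity
    have hn₁1 : n₁ = 1 := by
      have : n₁ * p^2 = 1 * p^2 := by rw [one_mul, ← hn₀k, hprod, hn₀k]
      exact Nat.eq_of_mul_eq_mul_right hp2 this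
    have hτ1 : star τ * τ = 1 := by
      rw [Quaternion.star_mul_self, hn₁, hn₁1]; norm_num
    have hηp : η = star τ * (p:ℍ[ℚ]) := by
      calc η = (star τ * τ) * η := by rw [hτ1, one_mul]
        _ = star τ * (τ * η) := by rw [mul_assoc]
        _ = star τ * (p:ℍ[ℚ]) := by rw [← hτeq]
    apply h2
    refine ⟨σ * star τ, Hur_mul hσ (Hur_star hτ), ?_⟩
    calc α * β = σ * η := hσeq
      _ = σ * (star τ * (p:ℍ[ℚ])) := by rw [hηp]
      _ = (σ * star τ) * (p:ℍ[ℚ]) := by rw [mul_assoc]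
      _ = (p:ℍ[ℚ]) * (σ * star τ) := (hcomm _).symm
end

section
/- Let H = (−1,−3/Q) be the quaternion algebra with i² = −1, j² = −3, k = ij, and let O be the maximal order with Z-basis {1, i, λ, μ} where λ = (i+j)/2 and μ = (1+k)/2. A quaternion α = a₀ + a₁i + a₂j + a₃k ∈ H belongs to the set {α ∈ O : α ≡ 1 mod 2O, Nm(α) = p} if and only if: (i) all aᵢ are integers, (ii) a₀² + a₁² + 3a₂² + 3a₃² = p, and (iii) a₀ + a₃ ≡ 1 (mod 2) and a₁ + a₂ ≡ 0 (mod 2). -/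
/-!
Writing `w = x + y i + z λ + t μ`, the quaternion `1 + 2w` has coordinates
`(2x + t + 1, 2y + z, z, t)`, so `1 + 2O` is exactly the set of integral quaternions with
`a₀ + a₃` odd and `a₁ + a₂` even. It lies in `O`, and on it the reduced norm is the integral
form `a₀² + a₁² + 3a₂² + 3a₃²`.
-/

open scoped Quaternion

/-- The element `x·1 + y·i + z·λ + t·μ` of `(−1,−3/ℚ)`, where `λ = (i+j)/2` and
`μ = (1+k)/2`, expressed in the coordinates `(re, imI, imJ, imK)`. -/
noncomputable def o3Elt (x y z t : ℤ) : ℍ[ℚ,-1,-3] :=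
  ⟨(x : ℚ) + (t : ℚ)/2, (y : ℚ) + (z : ℚ)/2, (z : ℚ)/2, (t : ℚ)/2⟩

/-- The maximal order of `(−1,−3/ℚ)` with `ℤ`-basis `{1, i, (i+j)/2, (1+k)/2}`. -/
def O3 : Set ℍ[ℚ,-1,-3] := {w | ∃ x y z t : ℤ, w = o3Elt x y z t}

theorem QuaternionAlgebra.re_mul_star_mk {R : Type*} [CommRing R] (c₁ c₃ a₀ a₁ a₂ a₃ : R) :
    ((⟨a₀, a₁, a₂, a₃⟩ : ℍ[R,c₁,c₃]) * star ⟨a₀, a₁, a₂, a₃⟩).re =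
      a₀ ^ 2 - c₁ * a₁ ^ 2 - c₃ * a₂ ^ 2 + c₁ * c₃ * a₃ ^ 2 := by
  simp only [QuaternionAlgebra.re_mul, QuaternionAlgebra.re_star, QuaternionAlgebra.imI_star,
    QuaternionAlgebra.imJ_star, QuaternionAlgebra.imK_star]
  ring

theorem one_add_two_mul_o3Elt (x y z t : ℤ) :
    1 + 2 * o3Elt x y z t = ⟨(2 * x + t + 1 : ℤ), (2 * y + z : ℤ), z, t⟩ := by
  rw [two_mul]
  ext <;> simp [o3Elt] <;> ring

theorem one_add_two_mul_mem_O3 {w : ℍ[ℚ,-1,-3]} (hw : w ∈ O3) : 1 + 2 * w ∈ O3 := by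
  obtain ⟨x, y, z, t, rfl⟩ := hw
  refine ⟨2 * x + 1, 2 * y, 2 * z, 2 * t, ?_⟩
  rw [one_add_two_mul_o3Elt]
  ext <;> simp [o3Elt, add_right_comm]

theorem exists_mem_O3_sub_one_eq_two_mul_iff (α : ℍ[ℚ,-1,-3]) :
    (∃ w ∈ O3, α - 1 = 2 * w) ↔ ∃ b0 b1 b2 b3 : ℤ, α = ⟨b0, b1, b2, b3⟩ ∧
      b0 + b3 ≡ 1 [ZMOD 2] ∧ b1 + b2 ≡ 0 [ZMOD 2] := by
  simp only [sub_eq_iff_eq_add']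
  constructor
  · rintro ⟨_, ⟨x, y, z, t, rfl⟩, rfl⟩
    refine ⟨_, _, _, _, one_add_two_mul_o3Elt x y z t, ?_, ?_⟩ <;>
      simp only [Int.ModEq] <;> omega
  · rintro ⟨b0, b1, b2, b3, rfl, h03, h12⟩
    simp only [Int.ModEq] at h03 h12
    obtain ⟨x, rfl⟩ : ∃ x, 2 * x + b3 + 1 = b0 := ⟨(b0 - b3 - 1) / 2, by omega⟩
    obtain ⟨y, rfl⟩ : ∃ y, 2 * y + b2 = b1 := ⟨(b1 - b2) / 2, by omega⟩
    exact ⟨_, ⟨x, y, b2, b3, rfl⟩, (one_add_two_mul_o3Elt x y b2 b3).symm⟩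

theorem stmt_5_general (p : ℕ) (a0 a1 a2 a3 : ℚ) (α : ℍ[ℚ,-1,-3])
    (hα : α = ⟨a0, a1, a2, a3⟩) :
    (α ∈ O3 ∧ (∃ w ∈ O3, α - 1 = 2 * w) ∧ (α * star α).re = (p : ℚ)) ↔
      ∃ b0 b1 b2 b3 : ℤ, a0 = (b0 : ℚ) ∧ a1 = (b1 : ℚ) ∧ a2 = (b2 : ℚ) ∧ a3 = (b3 : ℚ) ∧
        b0 ^ 2 + b1 ^ 2 + 3 * b2 ^ 2 + 3 * b3 ^ 2 = (p : ℤ) ∧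
        b0 + b3 ≡ 1 [ZMOD 2] ∧ b1 + b2 ≡ 0 [ZMOD 2] := by
  have norm_eq (b0 b1 b2 b3 : ℤ) :
      ((⟨b0, b1, b2, b3⟩ : ℍ[ℚ,-1,-3]) * star ⟨b0, b1, b2, b3⟩).re = (p : ℚ) ↔
        b0 ^ 2 + b1 ^ 2 + 3 * b2 ^ 2 + 3 * b3 ^ 2 = (p : ℤ) := by
    rw [QuaternionAlgebra.re_mul_star_mk, ← Int.cast_inj (α := ℚ)]
    push_cast
    ring_nf
  have mem_of_sub_one_eq_two_mul : (∃ w ∈ O3, α - 1 = 2 * w) → α ∈ O3 := fun ⟨w, hw, h⟩ =>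
    sub_eq_iff_eq_add'.mp h ▸ one_add_two_mul_mem_O3 hw
  rw [and_iff_right_of_imp fun h => mem_of_sub_one_eq_two_mul h.1,
    exists_mem_O3_sub_one_eq_two_mul_iff]
  subst hα
  constructor
  · rintro ⟨⟨b0, b1, b2, b3, hb, h03, h12⟩, hnorm⟩
    obtain ⟨rfl, rfl, rfl, rfl⟩ := QuaternionAlgebra.mk.inj hb
    exact ⟨b0, b1, b2, b3, rfl, rfl, rfl, rfl, (norm_eq _ _ _ _).mp hnorm, h03, h12⟩
  · rintro ⟨b0, b1, b2, b3, rfl, rfl, rfl, rfl, hn, h03, h12⟩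
    exact ⟨⟨b0, b1, b2, b3, rfl, h03, h12⟩, (norm_eq _ _ _ _).mpr hn⟩

/-- A quaternion `α = a₀ + a₁i + a₂j + a₃k` of `(−1,−3/ℚ)` lies in the set
`{α ∈ O : α ≡ 1 mod 2O, Nm(α) = p}` if and only if all the `aᵢ` are integers,
`a₀² + a₁² + 3a₂² + 3a₃² = p`, `a₀ + a₃ ≡ 1 (mod 2)` and `a₁ + a₂ ≡ 0 (mod 2)`. -/
theorem stmt_5 (p : ℕ) (hp : p.Prime) (a0 a1 a2 a3 : ℚ) (α : ℍ[ℚ,-1,-3])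
    (hα : α = ⟨a0, a1, a2, a3⟩) :
    (α ∈ O3 ∧ (∃ w ∈ O3, α - 1 = 2 * w) ∧ (α * star α).re = (p : ℚ)) ↔
      ∃ b0 b1 b2 b3 : ℤ, a0 = (b0 : ℚ) ∧ a1 = (b1 : ℚ) ∧ a2 = (b2 : ℚ) ∧ a3 = (b3 : ℚ) ∧
        b0 ^ 2 + b1 ^ 2 + 3 * b2 ^ 2 + 3 * b3 ^ 2 = (p : ℤ) ∧
        b0 + b3 ≡ 1 [ZMOD 2] ∧ b1 + b2 ≡ 0 [ZMOD 2] :=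
  stmt_5_general p a0 a1 a2 a3 α hα
end

section
/- Let p be a prime with p ≡ 1 (mod 4). Then there are no integers a₁, a₂, a₃ with a₁² + 3a₂² + 3a₃² = p, a₃ odd, and a₁ + a₂ even. Equivalently, in the maximal order O of the quaternion algebra (−1,−3/Q), there is no pure quaternion α (i.e., Tr(α) = 0) of reduced norm p with α ≡ 1 mod 2O. -/
open scoped Quaternion

/-! When `a₃` is odd and `a₁ + a₂` even, `a₁² + 3a₂² + 3a₃² ≡ 3 mod 4`, so it is never a
prime `≡ 1 mod 4`.
On the quaternion side, a pure `α ∈ O` with `α ≡ 1 mod 2O` has integral coordinates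
`α = a₁ i + a₂ j + a₃ k` with `a₃` odd and `a₁ + a₂` even, and its reduced norm is
`a₁² + 3a₂² + 3a₃²`. -/

lemma sq_add_three_mul_sq_add_three_mul_sq_emod_four {a₁ a₂ a₃ : ℤ} (h₃ : Odd a₃)
    (h₁₂ : Even (a₁ + a₂)) : (a₁ ^ 2 + 3 * a₂ ^ 2 + 3 * a₃ ^ 2) % 4 = 3 := by
  obtain ⟨k, rfl⟩ := h₃
  obtain ⟨m, hm⟩ := h₁₂
  obtain rfl : a₁ = m + m - a₂ := by omega
  have : (m + m - a₂) ^ 2 + 3 * a₂ ^ 2 + 3 * (2 * k + 1) ^ 2 =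
      4 * (m ^ 2 - m * a₂ + a₂ ^ 2 + 3 * k ^ 2 + 3 * k) + 3 := by ring
  omega

lemma not_exists_sq_add_three_mul_sq_add_three_mul_sq_of_emod_four_eq_one {n : ℤ}
    (hn : n % 4 = 1) :
    ¬ ∃ a₁ a₂ a₃ : ℤ, a₁ ^ 2 + 3 * a₂ ^ 2 + 3 * a₃ ^ 2 = n ∧ Odd a₃ ∧ Even (a₁ + a₂) := by
  rintro ⟨a₁, a₂, a₃, rfl, h₃, h₁₂⟩
  have := sq_add_three_mul_sq_add_three_mul_sq_emod_four h₃ h₁₂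
  omega

lemma QuaternionAlgebra.re_mul_star_mk_zero {R : Type*} [CommRing R] (c₁ c₂ x y z : R) :
    ((⟨0, x, y, z⟩ : ℍ[R,c₁,c₂]) * star ⟨0, x, y, z⟩).re =
      -c₁ * x ^ 2 - c₂ * y ^ 2 + c₁ * c₂ * z ^ 2 := by
  simp only [QuaternionAlgebra.star_mk, QuaternionAlgebra.mk_mul_mk]
  ring

lemma exists_int_coords_of_mem_O3_of_pure_of_sub_one_mem_two_O3 {α : ℍ[ℚ,-1,-3]}
    (hα : α ∈ O3) (hpure : α + star α = 0) (hcong : ∃ w ∈ O3, α - 1 = 2 * w) :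
    ∃ a₁ a₂ a₃ : ℤ, α = ⟨0, a₁, a₂, a₃⟩ ∧ Odd a₃ ∧ Even (a₁ + a₂) := by
  obtain ⟨x, y, z, t, rfl⟩ := hα
  obtain ⟨w, ⟨x', y', z', t', rfl⟩, hcong⟩ := hcong
  rw [← QuaternionAlgebra.coe_ofNat, QuaternionAlgebra.coe_mul_eq_smul] at hcong
  simp only [o3Elt, QuaternionAlgebra.star_mk, QuaternionAlgebra.mk_add_mk,
    QuaternionAlgebra.ext_iff, QuaternionAlgebra.smul_mk, smul_eq_mul, QuaternionAlgebra.re_sub,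
    QuaternionAlgebra.imI_sub, QuaternionAlgebra.imJ_sub, QuaternionAlgebra.imK_sub,
    QuaternionAlgebra.re_one, QuaternionAlgebra.imI_one, QuaternionAlgebra.imJ_one,
    QuaternionAlgebra.imK_one, QuaternionAlgebra.re_zero] at hpure hcong
  obtain ⟨hre, -⟩ := hpure
  obtain ⟨hre', hi, hj, hk⟩ := hcong
  have hz : z = 2 * z' := by exact_mod_cast (by linarith : (z : ℚ) = 2 * z')
  have ht : t = 2 * t' := by exact_mod_cast (by linarith : (t : ℚ) = 2 * t')
  have hy : y = 2 * y' := by exact_mod_cast (by linarith : (y : ℚ) = 2 * y')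
  have hx : x = -t' := by exact_mod_cast (by linarith : (x : ℚ) = -t')
  have ht' : t' = 2 * (-x' - 1) + 1 := by
    exact_mod_cast (by linarith : (t' : ℚ) = 2 * (-x' - 1) + 1)
  subst hz ht hy hx
  refine ⟨2 * y' + z', z', t', ?_, ⟨-x' - 1, ht'⟩, ⟨y' + z', by ring⟩⟩
  ext <;> simp only [o3Elt] <;> push_cast <;> ring

theorem stmt_6_general (p : ℕ) (h4 : p % 4 = 1) :
    (¬ ∃ a1 a2 a3 : ℤ, a1 ^ 2 + 3 * a2 ^ 2 + 3 * a3 ^ 2 = (p : ℤ) ∧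
        Odd a3 ∧ Even (a1 + a2)) ∧
      ¬ ∃ α : ℍ[ℚ,-1,-3], α ∈ O3 ∧ α + star α = 0 ∧ (α * star α).re = (p : ℚ) ∧
        ∃ w ∈ O3, α - 1 = 2 * w := by
  have hp4 : (p : ℤ) % 4 = 1 := by omega
  refine ⟨not_exists_sq_add_three_mul_sq_add_three_mul_sq_of_emod_four_eq_one hp4, ?_⟩
  rintro ⟨α, hα, hpure, hnorm, hcong⟩
  obtain ⟨a₁, a₂, a₃, rfl, h₃, h₁₂⟩ :=
    exists_int_coords_of_mem_O3_of_pure_of_sub_one_mem_two_O3 hα hpure hcong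
  rw [QuaternionAlgebra.re_mul_star_mk_zero] at hnorm
  refine not_exists_sq_add_three_mul_sq_add_three_mul_sq_of_emod_four_eq_one hp4
    ⟨a₁, a₂, a₃, ?_, h₃, h₁₂⟩
  exact_mod_cast (by linarith : (a₁ ^ 2 + 3 * a₂ ^ 2 + 3 * a₃ ^ 2 : ℚ) = p)

/-- If `p ≡ 1 (mod 4)` is prime, then there are no integers `a₁, a₂, a₃` with
`a₁² + 3a₂² + 3a₃² = p`, `a₃` odd and `a₁ + a₂` even; equivalently, there is no pure
quaternion (reduced trace `0`) in the maximal order of `(−1,−3/ℚ)` of reduced norm `p`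
congruent to `1` mod `2O`. -/
theorem stmt_6 (p : ℕ) (hp : p.Prime) (h4 : p % 4 = 1) :
    (¬ ∃ a1 a2 a3 : ℤ, a1 ^ 2 + 3 * a2 ^ 2 + 3 * a3 ^ 2 = (p : ℤ) ∧
        Odd a3 ∧ Even (a1 + a2)) ∧
      ¬ ∃ α : ℍ[ℚ,-1,-3], α ∈ O3 ∧ α + star α = 0 ∧ (α * star α).re = (p : ℚ) ∧
        ∃ w ∈ O3, α - 1 = 2 * w :=
  stmt_6_general p h4
end

section
/- Let H be a definite quaternion algebra over Q, O ⊂ H an order over Z, p a prime, and O[1/p] = O ⊗_Z Z[1/p]. An element α ∈ O[1/p] is a unit of O[1/p] if and only if its reduced norm Nm(α) equals p^s for some integer s ∈ Z. Moreover, the subgroup O[1/p]×₊ = {α ∈ O[1/p]× : v_p(Nm(α)) ≡ 0 (mod 2)} has index 2 in O[1/p]×. -/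
/-!
The reduced norm is multiplicative, and positive on nonzero elements because the algebra is
definite. Elements of an order are integral over `ℤ`, hence so are their reduced trace `x + x̄`
and norm `x x̄` (computed in the commutative ring `ℤ[x, x̄]`); being rational, these are
integers, and the order is stable under conjugation `x̄ = tr x - x`. So if `α β = 1` in
`O[1/p]`, then `N(α) N(β) = 1` with `N(α) > 0` and both norms in `ℤ[1/p]`, which forces
`N(α) = p ^ s`; conversely, if `N(α) = p ^ s` then `p ^ (-s) ᾱ ∈ O[1/p]` is an inverse of `α`.
The parity of `s` is then a homomorphism onto `ℤ/2`, surjective as soon as some element of `O`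
has norm `p`.
-/

set_option synthInstance.maxHeartbeats 1000000

open scoped Quaternion

/-- The reduced norm of an element of the quaternion algebra `(a,b/ℚ)`. -/
def qnorm (a b : ℚ) (x : ℍ[ℚ,a,b]) : ℚ := (x * star x).re

/-- The localized order `O[1/p] = O ⊗ ℤ[1/p]`, realized inside the quaternion algebra as the
set of elements that land in `O` after multiplication by a power of `p`. -/
def Olp (a b : ℚ) (O : Subalgebra ℤ ℍ[ℚ,a,b]) (p : ℕ) : Set ℍ[ℚ,a,b] :=
  {x | ∃ n : ℕ, (p : ℍ[ℚ,a,b]) ^ n * x ∈ O}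


open QuaternionAlgebra

theorem MulOpposite.isIntegral_op_iff {R A : Type*} [CommRing R] [Ring A] [Algebra R A] {x : A} :
    IsIntegral R (MulOpposite.op x) ↔ IsIntegral R x := by
  simp only [IsIntegral, RingHom.IsIntegralElem, ← Polynomial.aeval_def,
    Polynomial.aeval_op_apply, MulOpposite.op_eq_zero_iff]

theorem IsIntegral.star_int {A : Type*} [Ring A] [StarRing A] {x : A} (hx : IsIntegral ℤ x) :
    IsIntegral ℤ (star x) := by
  rw [← MulOpposite.isIntegral_op_iff, ← starRingEquiv_apply]
  exact hx.map (starRingEquiv : A ≃+* Aᵐᵒᵖ).toRingHom.toIntAlgHom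

open scoped IsMulCommutative in
theorem Commute.isIntegral_of_mem_adjoin {R A : Type*} [CommRing R] [Ring A] [Algebra R A]
    {x y z : A} (hxy : Commute x y) (hx : IsIntegral R x) (hy : IsIntegral R y)
    (hz : z ∈ Algebra.adjoin R {x, y}) : IsIntegral R z := by
  set C := Algebra.adjoin R {x, y}
  have : IsMulCommutative C := Algebra.isMulCommutative_adjoin R (by
    rintro _ (rfl | rfl) _ (rfl | rfl)
    exacts [rfl, hxy.eq, hxy.eq.symm, rfl])
  have mem_map {w : A} (hw : w ∈ C) (h : IsIntegral R w) :
      w ∈ (integralClosure R C).map C.val :=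
    ⟨⟨w, hw⟩, (isIntegral_algHom_iff C.val Subtype.val_injective).mp h, rfl⟩
  have hle : C ≤ (integralClosure R C).map C.val := Algebra.adjoin_le <|
    Set.insert_subset_iff.mpr ⟨mem_map (Algebra.subset_adjoin (Set.mem_insert _ _)) hx,
      Set.singleton_subset_iff.mpr (mem_map (Algebra.subset_adjoin (by simp)) hy)⟩
  obtain ⟨w, hw, rfl⟩ := hle hz
  exact hw.map C.val

theorem Subalgebra.isIntegral_of_mem {R A : Type*} [CommRing R] [Ring A] [Algebra R A]
    {S : Subalgebra R A} [Module.Finite R S] {x : A} (hx : x ∈ S) : IsIntegral R x :=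
  (IsIntegral.of_finite R (⟨x, hx⟩ : S)).map S.val

theorem Rat.exists_intCast_eq_of_isIntegral_algebraMap {A : Type*} [Ring A] [Nontrivial A]
    [Algebra ℚ A] {q : ℚ} (h : IsIntegral ℤ (algebraMap ℚ A q)) : ∃ n : ℤ, (n : ℚ) = q :=
  IsIntegrallyClosed.isIntegral_iff.mp <|
    (isIntegral_algHom_iff ((Algebra.ofId ℚ A).restrictScalars ℤ)
      (algebraMap ℚ A).injective).mp h

theorem Rat.exists_zpow_eq_of_mul_eq_one {p : ℕ} (hp : p.Prime) {x y : ℚ} (hx : 0 < x)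
    (hxy : x * y = 1) {n m : ℕ} {N M : ℤ} (hN : (p : ℚ) ^ n * x = N)
    (hM : (p : ℚ) ^ m * y = M) :
    ∃ s : ℤ, x = (p : ℚ) ^ s := by
  have hp0 : (p : ℚ) ≠ 0 := by exact_mod_cast hp.ne_zero
  have hNM : N * M = (p : ℤ) ^ (n + m) := by
    have : (N : ℚ) * M = (p : ℚ) ^ (n + m) := by
      calc (N : ℚ) * M = (p : ℚ) ^ n * (p : ℚ) ^ m * (x * y) := by
            rw [← hN, ← hM]; ring
        _ = (p : ℚ) ^ (n + m) := by rw [hxy, mul_one, pow_add]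
    exact_mod_cast this
  have hNpos : 0 < N := by
    have : (0 : ℚ) < N := hN ▸ mul_pos (pow_pos (by exact_mod_cast hp.pos) n) hx
    exact_mod_cast this
  obtain ⟨j, -, hj⟩ := (Nat.dvd_prime_pow hp).mp <| show N.natAbs ∣ p ^ (n + m) by
    simpa [Int.natAbs_pow] using Int.natAbs_dvd_natAbs.mpr (Dvd.intro M hNM)
  have hNj : (N : ℚ) = (p : ℚ) ^ j := by
    rw [← Int.natAbs_of_nonneg hNpos.le, hj, Int.cast_natCast, Nat.cast_pow]
  refine ⟨j - n, ?_⟩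
  rw [zpow_sub₀ hp0, zpow_natCast, zpow_natCast, ← hNj, ← hN]
  field_simp

theorem exists_zpow_two_mul_eq_iff_even {K : Type*} [Field K] [LinearOrder K]
    [IsStrictOrderedRing K] {q : K} (hq : 1 < q) {s : ℤ} :
    (∃ u : ℤ, q ^ s = q ^ (2 * u)) ↔ Even s := by
  have hinj := zpow_right_injective₀ (zero_lt_one.trans hq) hq.ne'
  constructor
  · rintro ⟨u, hu⟩
    exact ⟨u, (hinj hu).trans (two_mul u)⟩
  · rintro ⟨u, rfl⟩
    exact ⟨u, by rw [two_mul]⟩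

section Quaternion

variable {a b : ℚ}

theorem qnorm_def' (x : ℍ[ℚ,a,b]) :
    qnorm a b x = x.re ^ 2 + -a * x.imI ^ 2 + -b * x.imJ ^ 2 + a * b * x.imK ^ 2 := by
  simp only [qnorm, re_mul, re_star, imI_star, imJ_star, imK_star]
  ring

theorem mul_star_eq_qnorm (x : ℍ[ℚ,a,b]) : x * star x = (qnorm a b x : ℍ[ℚ,a,b]) :=
  x.mul_star_eq_coe

theorem star_mul_eq_qnorm (x : ℍ[ℚ,a,b]) : star x * x = (qnorm a b x : ℍ[ℚ,a,b]) := by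
  rw [star_comm_self', mul_star_eq_qnorm]

theorem qnorm_mul (x y : ℍ[ℚ,a,b]) : qnorm a b (x * y) = qnorm a b x * qnorm a b y := by
  apply coe_injective (c₁ := a) (c₂ := 0) (c₃ := b)
  rw [← mul_star_eq_qnorm, star_mul, mul_assoc, ← mul_assoc y, mul_star_eq_qnorm y,
    coe_commutes, ← mul_assoc, mul_star_eq_qnorm x, coe_mul]

theorem qnorm_coe_mul (c : ℚ) (x : ℍ[ℚ,a,b]) : qnorm a b (c * x) = c ^ 2 * qnorm a b x := by
  rw [qnorm_mul, qnorm, star_coe, ← coe_mul, re_coe, sq]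

theorem qnorm_pos (ha : a < 0) (hb : b < 0) {x : ℍ[ℚ,a,b]} (hx : x ≠ 0) :
    0 < qnorm a b x := by
  have hab : 0 < a * b := mul_pos_of_neg_of_neg ha hb
  have hcoord : x.re ≠ 0 ∨ x.imI ≠ 0 ∨ x.imJ ≠ 0 ∨ x.imK ≠ 0 := by
    contrapose! hx
    ext <;> simp [hx]
  rw [qnorm_def']
  rcases hcoord with h | h | h | h <;> have := sq_pos_of_ne_zero h <;>
    nlinarith [sq_nonneg x.re, sq_nonneg x.imI, sq_nonneg x.imJ, sq_nonneg x.imK]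

theorem mul_inv_qnorm_mul_star {x : ℍ[ℚ,a,b]} (hx : qnorm a b x ≠ 0) :
    x * ((qnorm a b x)⁻¹ * star x) = 1 := by
  rw [← mul_assoc, ← coe_commutes, mul_assoc, mul_star_eq_qnorm, ← coe_mul, inv_mul_cancel₀ hx,
    coe_one]

theorem inv_qnorm_mul_star_mul {x : ℍ[ℚ,a,b]} (hx : qnorm a b x ≠ 0) :
    (qnorm a b x)⁻¹ * star x * x = 1 := by
  rw [mul_assoc, star_mul_eq_qnorm, ← coe_mul, inv_mul_cancel₀ hx, coe_one]

theorem exists_intCast_eq_two_mul_re_and_qnorm {x : ℍ[ℚ,a,b]} (hx : IsIntegral ℤ x) :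
    (∃ T : ℤ, (T : ℚ) = 2 * x.re) ∧ ∃ N : ℤ, (N : ℚ) = qnorm a b x := by
  have hcomm : Commute x (star x) := (star_comm_self' x).symm
  have hxC : x ∈ Algebra.adjoin ℤ {x, star x} := Algebra.subset_adjoin (Set.mem_insert _ _)
  have hsC : star x ∈ Algebra.adjoin ℤ {x, star x} :=
    Algebra.subset_adjoin (Set.mem_insert_of_mem _ rfl)
  constructor
  · refine Rat.exists_intCast_eq_of_isIntegral_algebraMap (A := ℍ[ℚ,a,b]) ?_
    rw [coe_algebraMap, show 2 * x.re = 2 * x.re + 0 * x.imI by ring, ← self_add_star']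
    exact hcomm.isIntegral_of_mem_adjoin hx hx.star_int (add_mem hxC hsC)
  · refine Rat.exists_intCast_eq_of_isIntegral_algebraMap (A := ℍ[ℚ,a,b]) ?_
    rw [coe_algebraMap, ← mul_star_eq_qnorm]
    exact hcomm.isIntegral_of_mem_adjoin hx hx.star_int (mul_mem hxC hsC)

variable {O : Subalgebra ℤ ℍ[ℚ,a,b]} {p : ℕ}

theorem mem_Olp_of_mem {x : ℍ[ℚ,a,b]} (hx : x ∈ O) : x ∈ Olp a b O p :=
  ⟨0, by rwa [pow_zero, one_mul]⟩

theorem mul_mem_Olp {x y : ℍ[ℚ,a,b]} (hx : x ∈ Olp a b O p) (hy : y ∈ Olp a b O p) :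
    x * y ∈ Olp a b O p := by
  obtain ⟨n, hn⟩ := hx
  obtain ⟨m, hm⟩ := hy
  refine ⟨n + m, ?_⟩
  rw [pow_add, ← ((Nat.cast_commute p x).pow_left m).symm.mul_mul_mul_comm]
  exact mul_mem hn hm

theorem coe_zpow_mem_Olp (hp : p ≠ 0) (s : ℤ) :
    (((p : ℚ) ^ s : ℚ) : ℍ[ℚ,a,b]) ∈ Olp a b O p := by
  obtain ⟨k, rfl | rfl⟩ := Int.eq_nat_or_neg s
  · refine mem_Olp_of_mem ?_
    rw [zpow_natCast, coe_pow, coe_natCast]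
    exact pow_mem (natCast_mem O p) k
  · refine ⟨k, ?_⟩
    rw [zpow_neg, zpow_natCast, ← coe_natCast, ← coe_pow, ← coe_mul,
      mul_inv_cancel₀ (pow_ne_zero _ (Nat.cast_ne_zero.mpr hp)), coe_one]
    exact one_mem O

variable [Module.Finite ℤ O]

theorem star_mem_of_finite {x : ℍ[ℚ,a,b]} (hx : x ∈ O) : star x ∈ O := by
  obtain ⟨⟨T, hT⟩, -⟩ :=
    exists_intCast_eq_two_mul_re_and_qnorm (Subalgebra.isIntegral_of_mem hx)
  rw [star_eq_two_re_sub, zero_mul, add_zero, ← hT, coe_intCast]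
  exact sub_mem (intCast_mem O T) hx

theorem star_mem_Olp {x : ℍ[ℚ,a,b]} (hx : x ∈ Olp a b O p) : star x ∈ Olp a b O p := by
  obtain ⟨n, hn⟩ := hx
  refine ⟨n, ?_⟩
  rw [((Nat.cast_commute p (star x)).pow_left n).eq, ← star_natCast, ← star_pow, ← star_mul]
  exact star_mem_of_finite hn

theorem exists_pow_mul_qnorm_eq_intCast {x : ℍ[ℚ,a,b]} (hx : x ∈ Olp a b O p) :
    ∃ n : ℕ, ∃ N : ℤ, (p : ℚ) ^ n * qnorm a b x = N := by
  obtain ⟨k, hk⟩ := hx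
  obtain ⟨-, N, hN⟩ := exists_intCast_eq_two_mul_re_and_qnorm (Subalgebra.isIntegral_of_mem hk)
  refine ⟨k * 2, N, ?_⟩
  rw [hN, ← coe_natCast, ← coe_pow, qnorm_coe_mul, pow_mul]

theorem exists_inverse_mem_Olp_iff (ha : a < 0) (hb : b < 0) (hp : p.Prime) {α : ℍ[ℚ,a,b]}
    (hα : α ∈ Olp a b O p) :
    (∃ β ∈ Olp a b O p, α * β = 1 ∧ β * α = 1) ↔ ∃ s : ℤ, qnorm a b α = (p : ℚ) ^ s := by
  constructor
  · rintro ⟨β, hβ, hαβ, -⟩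
    have hα0 : α ≠ 0 := by rintro rfl; simp at hαβ
    obtain ⟨n, N, hN⟩ := exists_pow_mul_qnorm_eq_intCast hα
    obtain ⟨m, M, hM⟩ := exists_pow_mul_qnorm_eq_intCast hβ
    have hnorm : qnorm a b α * qnorm a b β = 1 := by
      rw [← qnorm_mul, hαβ]; simp [qnorm]
    exact Rat.exists_zpow_eq_of_mul_eq_one hp (qnorm_pos ha hb hα0) hnorm hN hM
  · rintro ⟨s, hs⟩
    have hα0 : qnorm a b α ≠ 0 := hs ▸ zpow_ne_zero s (Nat.cast_ne_zero.mpr hp.ne_zero)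
    refine ⟨_, mul_mem_Olp ?_ (star_mem_Olp hα), mul_inv_qnorm_mul_star hα0,
      inv_qnorm_mul_star_mul hα0⟩
    rw [hs, ← zpow_neg]
    exact coe_zpow_mem_Olp hp.ne_zero (-s)

end Quaternion

/-- Let `O` be an order in a definite quaternion algebra `(a,b/ℚ)` (with
`a, b < 0`) and `p` a prime.  An element `α ∈ O[1/p]` is a unit of `O[1/p]` iff its reduced
norm is `p^s` for some `s ∈ ℤ`.  Moreover (assuming, as needed, that `O` contains an element
of reduced norm `p`), the subgroup `O[1/p]×₊` of units whose norm has even `p`-adic valuation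
has index 2 in `O[1/p]×`: it is proper, and the product of any two units outside it lies in
it. -/
theorem stmt_13 (a b : ℚ) (ha : a < 0) (hb : b < 0) (O : Subalgebra ℤ ℍ[ℚ,a,b])
    [Module.Free ℤ O] (hrank : Module.finrank ℤ O = 4) (p : ℕ) (hp : p.Prime) :
    (∀ α ∈ Olp a b O p,
      ((∃ β ∈ Olp a b O p, α * β = 1 ∧ β * α = 1) ↔ ∃ s : ℤ, qnorm a b α = (p : ℚ) ^ s)) ∧
    ((∃ γ ∈ O, qnorm a b γ = (p : ℚ)) →
      (∃ α ∈ Olp a b O p, (∃ β ∈ Olp a b O p, α * β = 1 ∧ β * α = 1) ∧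
          ¬ ∃ s : ℤ, qnorm a b α = (p : ℚ) ^ (2 * s)) ∧
      (∀ α β : ℍ[ℚ,a,b], α ∈ Olp a b O p → β ∈ Olp a b O p →
        (∃ α' ∈ Olp a b O p, α * α' = 1 ∧ α' * α = 1) →
        (∃ β' ∈ Olp a b O p, β * β' = 1 ∧ β' * β = 1) →
        (¬ ∃ s : ℤ, qnorm a b α = (p : ℚ) ^ (2 * s)) →
        (¬ ∃ s : ℤ, qnorm a b β = (p : ℚ) ^ (2 * s)) →
        ∃ s : ℤ, qnorm a b (α * β) = (p : ℚ) ^ (2 * s))) := by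
  have : Module.Finite ℤ O := Module.finite_of_finrank_pos (by rw [hrank]; norm_num)
  have hp1 : (1 : ℚ) < p := by exact_mod_cast hp.one_lt
  have units := fun α (hα : α ∈ Olp a b O p) => exists_inverse_mem_Olp_iff ha hb hp hα
  refine ⟨units, fun ⟨γ, hγO, hγ⟩ => ⟨?_, ?_⟩⟩
  · have hγ' : qnorm a b γ = (p : ℚ) ^ (1 : ℤ) := by rw [hγ, zpow_one]
    refine ⟨γ, mem_Olp_of_mem hγO, (units γ (mem_Olp_of_mem hγO)).2 ⟨1, hγ'⟩, ?_⟩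
    rw [hγ', exists_zpow_two_mul_eq_iff_even hp1]
    exact Int.not_even_one
  · intro α β hα hβ hαunit hβunit hαodd hβodd
    obtain ⟨s, hs⟩ := (units α hα).1 hαunit
    obtain ⟨t, ht⟩ := (units β hβ).1 hβunit
    rw [hs, exists_zpow_two_mul_eq_iff_even hp1, Int.not_even_iff_odd] at hαodd
    rw [ht, exists_zpow_two_mul_eq_iff_even hp1, Int.not_even_iff_odd] at hβodd
    rw [qnorm_mul, hs, ht, ← zpow_add₀ (by positivity), exists_zpow_two_mul_eq_iff_even hp1]
    exact hαodd.add_odd hβodd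
end
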